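/- arXiv:2605.08900 — 6 statements merged into one kernel-verified Lean document; each statement's English description precedes it below -/
import Mathlib

section
/- For a T₀ space X, the canonical map ξ_X : X → P_S(X) sending x to ↑x (the saturation of {x}, i.e., the set of points y with x ≤ y in the specialization order) is a topological embedding with dense image. -/
open Set

/-- Specialization order: `x ≤ y` iff `x ∈ cl {y}`. -/
def specLE {X : Type} [TopologicalSpace X] (x y : X) : Prop := x ∈ closure {y}

/-- Upward closure w.r.t. the specialization order. -/
def upClosure {X : Type} [TopologicalSpace X] (A : Set X) : Set X :=
  {y | ∃ a ∈ A, specLE a y}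

/-- The underlying set of the Smyth power space: nonempty compact saturated subsets. -/
def SmythPS (X : Type) [TopologicalSpace X] : Type :=
  {K : Set X // K.Nonempty ∧ IsCompact K ∧ ∀ x ∈ K, ∀ y, specLE x y → y ∈ K}

/-- `□U = {K ∈ Q(X) : K ⊆ U}`. -/
def boxU {X : Type} [TopologicalSpace X] (U : Set X) : Set (SmythPS X) :=
  {K : SmythPS X | K.1 ⊆ U}

/-- The upper Vietoris topology on the Smyth power space. -/
instance smythTop (X : Type) [TopologicalSpace X] : TopologicalSpace (SmythPS X) :=
  TopologicalSpace.generateFrom {S : Set (SmythPS X) | ∃ U : Set X, IsOpen U ∧ S = boxU U}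

/-- The cut `A^δ = (A^↑)^↓` w.r.t. the specialization order. -/
def cutD {X : Type} [TopologicalSpace X] (A : Set X) : Set X :=
  {x | ∀ u : X, (∀ a ∈ A, specLE a u) → specLE x u}

/-- `U` is SI₂-open. -/
def SI2Open {X : Type} [TopologicalSpace X] (U : Set X) : Prop :=
  IsOpen U ∧ ∀ F : Set X, IsIrreducible F → (cutD F ∩ U).Nonempty → (F ∩ U).Nonempty

/-- `le` makes `I` the index of a net: nonempty, reflexive, transitive, directed. -/
def IsNetOrder {I : Type} (le : I → I → Prop) : Prop :=
  Nonempty I ∧ (∀ i, le i i) ∧ (∀ i j k, le i j → le j k → le i k) ∧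
    (∀ i j, ∃ k, le i k ∧ le j k)

/-- GSI₂-convergence of the net `xi` (indexed by `(I, le)`) to `x`. -/
def GSI2Conv {X : Type} [TopologicalSpace X] {I : Type} (le : I → I → Prop)
    (xi : I → X) (x : X) : Prop :=
  ∃ 𝒢 : Set (Set X), (∀ G ∈ 𝒢, G.Finite ∧ G.Nonempty) ∧
    IsIrreducible {K : SmythPS X | ∃ G ∈ 𝒢, K.1 = upClosure G} ∧
    (∀ U : Set X, IsOpen U → (∃ G ∈ 𝒢, upClosure G ⊆ U) →
      ∃ i₀, ∀ i, le i₀ i → xi i ∈ U) ∧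
    (⋂ G ∈ 𝒢, upClosure G) ⊆ upClosure {x}

/-- `A ≪_{I₂} B`. -/
def WayBelowI2 {X : Type} [TopologicalSpace X] (A B : Set X) : Prop :=
  ∀ D : Set X, IsIrreducible D → (cutD D ∩ B).Nonempty → (A ∩ closure D).Nonempty

/-- `w(x) = {↑F : F nonempty finite, F ≪_{I₂} x}` as a subset of the Smyth power space. -/
def wPS {X : Type} [TopologicalSpace X] (x : X) : Set (SmythPS X) :=
  {K : SmythPS X | ∃ F : Set X, F.Finite ∧ F.Nonempty ∧ WayBelowI2 F {x} ∧ K.1 = upClosure F}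

/-- QI₂-continuity. -/
def QI2Continuous (X : Type) [TopologicalSpace X] : Prop :=
  ∀ x : X, IsIrreducible (wPS x) ∧ upClosure {x} = ⋂ K ∈ wPS x, (K.1 : Set X)

/-- Strong QI₂-continuity. -/
def StronglyQI2Continuous (X : Type) [TopologicalSpace X] : Prop :=
  QI2Continuous X ∧
  ∀ (F : Set X) (x : X) (U : Set X), F.Finite → F.Nonempty → WayBelowI2 F {x} →
    IsOpen U → F ⊆ U → ∃ W : Set X, SI2Open W ∧ x ∈ W ∧ W ⊆ U

lemma mem_upClosure_self {X : Type} [TopologicalSpace X] (x : X) :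
    x ∈ upClosure ({x} : Set X) :=
  ⟨x, rfl, subset_closure rfl⟩

lemma upClosure_singleton_subset {X : Type} [TopologicalSpace X] {x : X} {U : Set X}
    (hU : IsOpen U) (hx : x ∈ U) : upClosure ({x} : Set X) ⊆ U := by
  rintro y ⟨a, rfl, hay⟩
  have := hU.mem_nhds hx
  rcases mem_closure_iff.1 hay U hU hx with ⟨z, hzU, hz⟩
  rwa [← hz]

lemma preimage_boxU {X : Type} [TopologicalSpace X] (ξ : X → SmythPS X)
    (hξ : ∀ x : X, (ξ x).1 = upClosure {x}) {U : Set X} (hU : IsOpen U) :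
    ξ ⁻¹' boxU U = U := by
  ext x
  constructor
  · intro hx
    have : upClosure ({x} : Set X) ⊆ U := by rw [← hξ x]; exact hx
    exact this (mem_upClosure_self x)
  · intro hx
    show (ξ x).1 ⊆ U
    rw [hξ x]
    exact upClosure_singleton_subset hU hx

lemma smyth_basis (X : Type) [TopologicalSpace X] :
    TopologicalSpace.IsTopologicalBasis
      {S : Set (SmythPS X) | ∃ U : Set X, IsOpen U ∧ S = boxU U} := by
  refine ⟨?_, ?_, rfl⟩
  · rintro _ ⟨U, hU, rfl⟩ _ ⟨V, hV, rfl⟩ K ⟨hKU, hKV⟩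
    exact ⟨boxU (U ∩ V), ⟨U ∩ V, hU.inter hV, rfl⟩,
      subset_inter hKU hKV, fun L hL => ⟨hL.trans inter_subset_left,
        hL.trans inter_subset_right⟩⟩
  · refine eq_univ_of_forall fun K => ?_
    exact mem_sUnion.2 ⟨boxU univ, ⟨univ, isOpen_univ, rfl⟩, subset_univ _⟩

theorem stmt3 {X : Type} [TopologicalSpace X] [T0Space X]
    (ξ : X → SmythPS X) (hξ : ∀ x : X, (ξ x).1 = upClosure {x}) :
    Topology.IsEmbedding ξ ∧ DenseRange ξ := by
  constructor
  · constructor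
    · constructor
      show ‹TopologicalSpace X› = TopologicalSpace.induced ξ (smythTop X)
      rw [show smythTop X = TopologicalSpace.generateFrom
          {S : Set (SmythPS X) | ∃ U : Set X, IsOpen U ∧ S = boxU U} from rfl,
        induced_generateFrom_eq]
      apply le_antisymm
      · rw [TopologicalSpace.le_generateFrom_iff_subset_isOpen]
        rintro _ ⟨_, ⟨U, hU, rfl⟩, rfl⟩
        rw [preimage_boxU ξ hξ hU]
        exact hU
      · intro s hs
        exact TopologicalSpace.isOpen_generateFrom_of_mem
          ⟨boxU s, ⟨s, hs, rfl⟩, preimage_boxU ξ hξ hs⟩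
    · intro x y hxy
      have h1 : upClosure ({x} : Set X) = upClosure ({y} : Set X) := by
        rw [← hξ x, ← hξ y, hxy]
      have hx' : x ∈ upClosure ({y} : Set X) := h1 ▸ mem_upClosure_self x
      have hy' : y ∈ upClosure ({x} : Set X) := h1 ▸ mem_upClosure_self y
      obtain ⟨a, ha, hax⟩ := hx'
      obtain ⟨b, hb, hby⟩ := hy'
      rw [mem_singleton_iff] at ha hb
      rw [ha] at hax; rw [hb] at hby
      unfold specLE at hax hby
      have : Inseparable x y := inseparable_iff_mem_closure.2 ⟨hby, hax⟩
      exact this.eq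
  · show Dense (range ξ)
    rw [(smyth_basis X).dense_iff]
    rintro _ ⟨U, hU, rfl⟩ ⟨K, hK⟩
    obtain ⟨x, hx⟩ := K.2.1
    refine ⟨ξ x, ?_, mem_range_self x⟩
    show (ξ x).1 ⊆ U
    rw [hξ x]
    exact upClosure_singleton_subset hU (hK hx)
end

section
/- (Topological Rudin Lemma) Let X be a topological space and 𝒜 an irreducible subset of the Smyth power space P_S(X) of nonempty compact saturated subsets of X. If C ⊆ X is a closed set that meets every member of 𝒜, then C contains a minimal irreducible closed subset A of X that still meets every member of 𝒜. -/
open Set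

lemma boxU_open {X : Type} [TopologicalSpace X] {U : Set X} (hU : IsOpen U) :
    IsOpen (boxU U) :=
  TopologicalSpace.isOpen_generateFrom_of_mem ⟨U, hU, rfl⟩

theorem stmt6 {X : Type} [TopologicalSpace X] (𝒜 : Set (SmythPS X))
    (h𝒜 : IsIrreducible 𝒜) (C : Set X) (hC : IsClosed C)
    (hmeet : ∀ K ∈ 𝒜, (C ∩ K.1).Nonempty) :
    ∃ A : Set X, A ⊆ C ∧ IsClosed A ∧ IsIrreducible A ∧
      (∀ K ∈ 𝒜, (A ∩ K.1).Nonempty) ∧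
      ∀ A' : Set X, A' ⊆ A → IsClosed A' → IsIrreducible A' →
        (∀ K ∈ 𝒜, (A' ∩ K.1).Nonempty) → A' = A := by
  classical
  set S : Set (Set X) := {B | B ⊆ C ∧ IsClosed B ∧ ∀ K ∈ 𝒜, (B ∩ K.1).Nonempty} with hS
  have hchain : ∀ c ⊆ S, IsChain (· ⊆ ·) c → c.Nonempty →
      ∃ lb ∈ S, ∀ s ∈ c, lb ⊆ s := by
    intro c hcS hchain hcne
    refine ⟨⋂₀ c, ⟨?_, ?_, ?_⟩, fun s hs => sInter_subset_of_mem hs⟩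
    · obtain ⟨B, hB⟩ := hcne
      exact (sInter_subset_of_mem hB).trans (hcS hB).1
    · exact isClosed_sInter fun B hB => (hcS hB).2.1
    · intro K hK
      have : Nonempty c := hcne.to_subtype
      have hdir : Directed (· ⊇ ·) (fun B : c => (B : Set X)) := by
        intro a b
        rcases hchain.total a.2 b.2 with h | h
        exacts [⟨a, Subset.rfl, h⟩, ⟨b, h, Subset.rfl⟩]
      have := K.2.2.1.inter_iInter_nonempty (fun B : c => (B : Set X))
        (fun B => (hcS B.2).2.1) ?_
      · obtain ⟨x, hxK, hx⟩ := this
        refine ⟨x, ?_, hxK⟩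
        rw [mem_iInter] at hx
        exact fun B hB => hx ⟨B, hB⟩
      · intro u
        obtain ⟨z, hz⟩ := hdir.finset_le u
        obtain ⟨x, hxz, hxK⟩ := (hcS z.2).2.2 K hK
        exact ⟨x, hxK, mem_iInter₂.2 fun B hB => hz B hB hxz⟩
  obtain ⟨A, hAC', hAmin⟩ := zorn_superset_nonempty S hchain C ⟨Subset.rfl, hC, hmeet⟩
  obtain ⟨hAC, hAcl, hAmeet⟩ := hAmin.prop
  have hmin : ∀ B ∈ S, B ⊆ A → B = A := fun B hB hBA => hAmin.eq_of_le hB hBA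
  -- A is nonempty
  obtain ⟨K₀, hK₀⟩ := h𝒜.1
  have hAne : A.Nonempty := ((hAmeet K₀ hK₀).mono inter_subset_left)
  -- A is irreducible
  have hirr : IsIrreducible A := by
    refine ⟨hAne, fun u v hu hv ⟨x, hxA, hxu⟩ ⟨y, hyA, hyv⟩ => ?_⟩
    -- F₁ = A ∩ uᶜ, F₂ = A ∩ vᶜ
    have hF : ∀ w : Set X, IsOpen w → ∀ p ∈ A, p ∈ w →
        ∃ K ∈ 𝒜, K ∈ boxU (A ∩ wᶜ)ᶜ := by
      intro w hw p hpA hpw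
      have hne : A ∩ wᶜ ≠ A := fun h => (h.symm ▸ hpA : p ∈ A ∩ wᶜ).2 hpw
      have : A ∩ wᶜ ∉ S := fun h => hne (hmin _ h inter_subset_left)
      simp only [hS, mem_setOf_eq, not_and] at this
      have h1 : A ∩ wᶜ ⊆ C := inter_subset_left.trans hAC
      have h2 : IsClosed (A ∩ wᶜ) := hAcl.inter hw.isClosed_compl
      push_neg at this
      obtain ⟨K, hK, hKe⟩ := this h1 h2
      refine ⟨K, hK, fun z hz hzF => ?_⟩
      exact absurd hKe (Set.nonempty_iff_ne_empty.1 ⟨z, hzF, hz⟩)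
    obtain ⟨K₁, hK₁A, hK₁⟩ := hF u hu x hxA hxu
    obtain ⟨K₂, hK₂A, hK₂⟩ := hF v hv y hyA hyv
    obtain ⟨K, hKA, hKm⟩ := h𝒜.2 (boxU (A ∩ uᶜ)ᶜ) (boxU (A ∩ vᶜ)ᶜ)
      (boxU_open (hAcl.inter hu.isClosed_compl).isOpen_compl)
      (boxU_open (hAcl.inter hv.isClosed_compl).isOpen_compl)
      ⟨K₁, hK₁A, hK₁⟩ ⟨K₂, hK₂A, hK₂⟩
    obtain ⟨z, hzA, hzK⟩ := hAmeet K hKA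
    have h1 : z ∉ A ∩ uᶜ := fun h => hKm.1 hzK h
    have h2 : z ∉ A ∩ vᶜ := fun h => hKm.2 hzK h
    refine ⟨z, hzA, not_not.1 fun h => ?_, not_not.1 fun h => ?_⟩
    · exact h1 ⟨hzA, h⟩
    · exact h2 ⟨hzA, h⟩
  exact ⟨A, hAC, hAcl, hirr, hAmeet, fun A' hA'A hA'cl hA'irr hA'meet =>
    hmin A' ⟨hA'A.trans hAC, hA'cl, hA'meet⟩ hA'A⟩
end

section
/- Let X be a T₀ space and 𝒦 an irreducible subset of the Smyth power space P_S(X). If B is a closed subset of X intersecting every element of 𝒦, then {↑(K ∩ B) : K ∈ 𝒦} is an irreducible subset of P_S(X). -/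
open Set

/-
For `U` open, `↑(K ∩ B) ⊆ U` iff `K ⊆ U ∪ Bᶜ`, and `U ∪ Bᶜ` is open because `B` is
closed. So `K ↦ ↑(K ∩ B)` pulls every subbasic open `□U` back to the subbasic open `□(U ∪ Bᶜ)`,
i.e. it is continuous on the compact saturated sets meeting `B`, and continuous images of
irreducible sets are irreducible.
-/

section

variable {X : Type} [TopologicalSpace X]

lemma upClosure_eq_nhdsKer (A : Set X) : upClosure A = nhdsKer A := by
  ext y
  simp only [upClosure, specLE, mem_ofPred_eq, mem_nhdsKer_iff_specializes,
    specializes_iff_mem_closure]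

lemma isOpen_boxU {U : Set X} (hU : IsOpen U) : IsOpen (boxU U) :=
  TopologicalSpace.isOpen_generateFrom_of_mem ⟨U, hU, rfl⟩

lemma subset_upClosure (A : Set X) : A ⊆ upClosure A :=
  fun a ha => ⟨a, ha, subset_closure rfl⟩

lemma IsCompact.upClosure {A : Set X} (hA : IsCompact A) : IsCompact (upClosure A) :=
  upClosure_eq_nhdsKer A ▸ hA.nhdsKer

lemma mem_upClosure_of_specLE {A : Set X} {x y : X} (hx : x ∈ upClosure A) (hxy : specLE x y) :
    y ∈ upClosure A := by
  obtain ⟨a, ha, hax⟩ := hx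
  exact ⟨a, ha, specializes_iff_mem_closure.1
    ((specializes_iff_mem_closure.2 hxy).trans (specializes_iff_mem_closure.2 hax))⟩

namespace SmythPS

open Classical in
/-- `↑(K ∩ B)` as a point of the Smyth power space when `K` meets `B`; the junk value `K`
otherwise. -/
noncomputable def upInter {B : Set X} (hB : IsClosed B) (K : SmythPS X) : SmythPS X :=
  if h : (K.1 ∩ B).Nonempty then
    ⟨upClosure (K.1 ∩ B), h.mono (subset_upClosure _), (K.2.2.1.inter_right hB).upClosure,
      fun _ hx _ hxy => mem_upClosure_of_specLE hx hxy⟩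
  else K

variable {B : Set X} (hB : IsClosed B)

lemma upInter_val {K : SmythPS X} (h : (K.1 ∩ B).Nonempty) :
    (upInter hB K).1 = upClosure (K.1 ∩ B) := by
  rw [upInter]
  exact congrArg Subtype.val (dif_pos h)

lemma upInter_mem_boxU_iff {K : SmythPS X} (h : (K.1 ∩ B).Nonempty) {U : Set X}
    (hU : IsOpen U) : upInter hB K ∈ boxU U ↔ K ∈ boxU (U ∪ Bᶜ) := by
  simp only [boxU, mem_ofPred_eq, upInter_val hB h, upClosure_eq_nhdsKer, hU.nhdsKer_subset,
    inter_subset, union_comm]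

lemma continuousOn_upInter : ContinuousOn (upInter hB) {K | (K.1 ∩ B).Nonempty} := by
  rw [continuousOn_iff_continuous_domRestrict, continuous_generateFrom_iff]
  rintro _ ⟨U, hU, rfl⟩
  have hpre : domRestrict {K | (K.1 ∩ B).Nonempty} (upInter hB) ⁻¹' boxU U =
      Subtype.val ⁻¹' boxU (U ∪ Bᶜ) :=
    ext fun K => upInter_mem_boxU_iff hB K.2 hU
  rw [hpre]
  exact (isOpen_boxU (hU.union hB.isOpen_compl)).preimage continuous_subtype_val

end SmythPS

end

theorem stmt8_general {X : Type} [TopologicalSpace X] (𝒦 : Set (SmythPS X))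
    (h𝒦 : IsIrreducible 𝒦) (B : Set X) (hB : IsClosed B)
    (hmeet : ∀ K ∈ 𝒦, (K.1 ∩ B).Nonempty) :
    IsIrreducible {L : SmythPS X | ∃ K ∈ 𝒦, L.1 = upClosure (K.1 ∩ B)} := by
  have himage :
      {L : SmythPS X | ∃ K ∈ 𝒦, L.1 = upClosure (K.1 ∩ B)} = SmythPS.upInter hB '' 𝒦 := by
    ext L
    constructor
    · rintro ⟨K, hK, hL⟩
      exact ⟨K, hK, Subtype.ext ((SmythPS.upInter_val hB (hmeet K hK)).trans hL.symm)⟩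
    · rintro ⟨K, hK, rfl⟩
      exact ⟨K, hK, SmythPS.upInter_val hB (hmeet K hK)⟩
  rw [himage]
  exact h𝒦.image _ ((SmythPS.continuousOn_upInter hB).mono hmeet)

theorem stmt8 {X : Type} [TopologicalSpace X] [T0Space X] (𝒦 : Set (SmythPS X))
    (h𝒦 : IsIrreducible 𝒦) (B : Set X) (hB : IsClosed B)
    (hmeet : ∀ K ∈ 𝒦, (K.1 ∩ B).Nonempty) :
    IsIrreducible {L : SmythPS X | ∃ K ∈ 𝒦, L.1 = upClosure (K.1 ∩ B)} :=
  stmt8_general 𝒦 h𝒦 B hB hmeet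
end

section
/- For a T₀ space X, the collection of SI₂-open sets forms a topology on X. -/
open Set

theorem stmt10 {X : Type} [TopologicalSpace X] [T0Space X] :
    SI2Open (Set.univ : Set X) ∧
    (∀ U V : Set X, SI2Open U → SI2Open V → SI2Open (U ∩ V)) ∧
    (∀ S : Set (Set X), (∀ U ∈ S, SI2Open U) → SI2Open (⋃₀ S)) := by
  refine ⟨⟨isOpen_univ, fun F hF h => ?_⟩, fun U V hU hV => ?_, fun S hS => ?_⟩
  · simpa using hF.nonempty
  · refine ⟨hU.1.inter hV.1, fun F hF h => ?_⟩
    obtain ⟨x, hx, hxU, hxV⟩ := h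
    have h1 := hU.2 F hF ⟨x, hx, hxU⟩
    have h2 := hV.2 F hF ⟨x, hx, hxV⟩
    exact hF.2 U V hU.1 hV.1 h1 h2
  · refine ⟨isOpen_sUnion fun U hU => (hS U hU).1, fun F hF h => ?_⟩
    obtain ⟨x, hx, U, hU, hxU⟩ := h
    obtain ⟨y, hy, hyU⟩ := (hS U hU).2 F hF ⟨x, hx, hxU⟩
    exact ⟨y, hy, U, hU, hyU⟩
end

section
/- Let X be a T₀ space. For every irreducible subset F of X and every x ∈ F^δ, there exists a net (x_i) with values in F that GSI₂-converges to x. -/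
open Set

lemma specLE_refl {X : Type} [TopologicalSpace X] (a : X) : specLE a a :=
  subset_closure rfl

lemma specLE_trans {X : Type} [TopologicalSpace X] {a b c : X}
    (h1 : specLE a b) (h2 : specLE b c) : specLE a c := by
  have : closure {b} ⊆ closure ({c} : Set X) := by
    rw [← closure_closure (s := ({c} : Set X))]
    exact closure_mono (singleton_subset_iff.mpr h2)
  exact this h1

lemma upSingleton_subset {X : Type} [TopologicalSpace X] {a : X} {U : Set X}
    (hU : IsOpen U) (ha : a ∈ U) : upClosure {a} ⊆ U := by
  rintro y ⟨b, hb1, hb⟩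
  rw [mem_singleton_iff] at hb1
  by_contra hy
  rw [specLE, mem_closure_iff] at hb
  obtain ⟨z, hz1, hz2⟩ := hb U hU (hb1 ▸ ha)
  rw [mem_singleton_iff] at hz2
  exact hy (hz2 ▸ hz1)

/-- `↑a` as an element of the Smyth power space. -/
def etaPS {X : Type} [TopologicalSpace X] (a : X) : SmythPS X :=
  ⟨upClosure {a}, ⟨a, a, rfl, specLE_refl a⟩, by
    apply isCompact_of_finite_subcover
    intro ι U hUo hcov
    have ha : a ∈ upClosure {a} := ⟨a, rfl, specLE_refl a⟩
    obtain ⟨i, hi⟩ := mem_iUnion.mp (hcov ha)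
    exact ⟨{i}, by
      simpa using upSingleton_subset (hUo i) hi⟩, by
    rintro y ⟨b, rfl, hb⟩ z hz
    exact ⟨b, rfl, specLE_trans hb hz⟩⟩

lemma etaPS_continuous {X : Type} [TopologicalSpace X] : Continuous (etaPS (X := X)) := by
  rw [continuous_generateFrom_iff]
  rintro S ⟨U, hU, rfl⟩
  have : etaPS ⁻¹' boxU U = U := by
    ext a
    constructor
    · intro h
      exact h ⟨a, rfl, specLE_refl a⟩
    · intro h
      exact upSingleton_subset hU h
  rw [this]; exact hU

theorem stmt12 {X : Type} [TopologicalSpace X] [T0Space X] (F : Set X)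
    (hF : IsIrreducible F) (x : X) (hx : x ∈ cutD F) :
    ∃ (I : Type) (le : I → I → Prop) (xi : I → X), IsNetOrder le ∧
      (∀ i, xi i ∈ F) ∧ GSI2Conv le xi x := by
  obtain ⟨a₀, ha₀⟩ := hF.nonempty
  refine ⟨{p : Set X × X // IsOpen p.1 ∧ p.2 ∈ F ∧ p.2 ∈ p.1},
    fun p q => q.1.1 ⊆ p.1.1, fun p => p.1.2, ?_, fun p => p.2.2.1, ?_⟩
  · refine ⟨⟨⟨(univ, a₀), isOpen_univ, ha₀, mem_univ _⟩⟩, fun i => subset_rfl,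
      fun i j k h1 h2 => h2.trans h1, fun p q => ?_⟩
    obtain ⟨c, hcF, hc⟩ := hF.2 p.1.1 q.1.1 p.2.1 q.2.1 ⟨p.1.2, p.2.2⟩ ⟨q.1.2, q.2.2⟩
    exact ⟨⟨(p.1.1 ∩ q.1.1, c), p.2.1.inter q.2.1, hcF, hc⟩,
      inter_subset_left, inter_subset_right⟩
  · refine ⟨(fun a => ({a} : Set X)) '' F, ?_, ?_, ?_, ?_⟩
    · rintro G ⟨a, _, rfl⟩
      exact ⟨finite_singleton a, singleton_nonempty a⟩
    · have : {K : SmythPS X | ∃ G ∈ (fun a => ({a} : Set X)) '' F, K.1 = upClosure G}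
          = etaPS '' F := by
        ext K
        constructor
        · rintro ⟨G, ⟨a, haF, rfl⟩, hK⟩
          exact ⟨a, haF, (Subtype.ext hK.symm : etaPS a = K)⟩
        · rintro ⟨a, haF, rfl⟩
          exact ⟨{a}, ⟨a, haF, rfl⟩, rfl⟩
      rw [this]
      exact hF.image _ etaPS_continuous.continuousOn
    · rintro U hU ⟨G, ⟨a, haF, rfl⟩, hGU⟩
      have ha : a ∈ U := hGU ⟨a, rfl, specLE_refl a⟩
      refine ⟨⟨(U, a), hU, haF, ha⟩, fun i hi => hi i.2.2.2⟩
    · intro u hu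
      refine ⟨x, rfl, hx u fun a haF => ?_⟩
      have := mem_iInter₂.mp hu {a} ⟨a, haF, rfl⟩
      obtain ⟨b, rfl, hb⟩ := this
      exact hb
end

section
/- Let X be a T₀ space and G, H, K, M ⊆ X. Then: (i) G ≪_{I₂} H iff G ≪_{I₂} {h} for all h ∈ H; (ii) G ≪_{I₂} H iff ↑G ≪_{I₂} ↑H; (iii) G ≪_{I₂} H implies ↑H ⊆ ↑G; (iv) if ↑H ⊆ ↑G, H ≪_{I₂} K, and ↑M ⊆ ↑K, then G ≪_{I₂} M. -/
open Set

/-!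
Both `closure D` and the cut `D^δ` are lower sets for the specialization order, so `A ≪_{I₂} B`
depends only on `↑A` and `↑B`; it is moreover monotone in `A` and antitone in `B`, which gives (i),
(ii) and (iv). For (iii), test the relation against the irreducible set `{h}`, whose cut is `↓h`.
-/

section WayBelowI2

variable {X : Type} [TopologicalSpace X]

lemma specLE_refl_s17 (x : X) : specLE x x :=
  subset_closure rfl

lemma specLE_trans_s17 {a b c : X} (hab : specLE a b) (hbc : specLE b c) : specLE a c :=
  specializes_iff_mem_closure.mp
    ((specializes_iff_mem_closure.mpr hbc).trans (specializes_iff_mem_closure.mpr hab))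

lemma mem_closure_of_specLE {D : Set X} {x y : X} (hx : x ∈ closure D) (hyx : specLE y x) :
    y ∈ closure D :=
  (specializes_iff_mem_closure.mpr hyx).mem_closed isClosed_closure hx

lemma mem_cutD_of_specLE {D : Set X} {x y : X} (hx : x ∈ cutD D) (hyx : specLE y x) :
    y ∈ cutD D :=
  fun u hu => specLE_trans_s17 hyx (hx u hu)

lemma WayBelowI2.mono {A A' B B' : Set X} (hA : A ⊆ A') (hB : B' ⊆ B) (h : WayBelowI2 A B) :
    WayBelowI2 A' B' := by
  intro D hD ⟨x, hxD, hxB⟩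
  obtain ⟨a, ha, haD⟩ := h D hD ⟨x, hxD, hB hxB⟩
  exact ⟨a, hA ha, haD⟩

lemma wayBelowI2_iff_forall_singleton {A B : Set X} :
    WayBelowI2 A B ↔ ∀ b ∈ B, WayBelowI2 A {b} := by
  refine ⟨fun h b hb => h.mono subset_rfl (singleton_subset_iff.mpr hb), ?_⟩
  intro h D hD ⟨x, hxD, hxB⟩
  exact h x hxB D hD ⟨x, hxD, rfl⟩

lemma wayBelowI2_upClosure_left_iff {A B : Set X} :
    WayBelowI2 (upClosure A) B ↔ WayBelowI2 A B := by
  refine ⟨?_, WayBelowI2.mono (subset_upClosure A) subset_rfl⟩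
  intro h D hD hB
  obtain ⟨y, ⟨a, ha, hay⟩, hyD⟩ := h D hD hB
  exact ⟨a, ha, mem_closure_of_specLE hyD hay⟩

lemma wayBelowI2_upClosure_right_iff {A B : Set X} :
    WayBelowI2 A (upClosure B) ↔ WayBelowI2 A B := by
  refine ⟨WayBelowI2.mono subset_rfl (subset_upClosure B), ?_⟩
  intro h D hD ⟨x, hxD, b, hb, hbx⟩
  exact h D hD ⟨b, mem_cutD_of_specLE hxD hbx, hb⟩

lemma WayBelowI2.upClosure_subset {A B : Set X} (h : WayBelowI2 A B) :
    upClosure B ⊆ upClosure A := by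
  rintro y ⟨b, hb, hby⟩
  have hb_cut : b ∈ cutD ({b} : Set X) := fun u hu => hu b rfl
  obtain ⟨a, ha, hab⟩ := h {b} isIrreducible_singleton ⟨b, hb_cut, hb⟩
  exact ⟨a, ha, specLE_trans_s17 hab hby⟩

end WayBelowI2

theorem stmt17_general {X : Type} [TopologicalSpace X] (G H K M : Set X) :
    (WayBelowI2 G H ↔ ∀ h ∈ H, WayBelowI2 G {h}) ∧
    (WayBelowI2 G H ↔ WayBelowI2 (upClosure G) (upClosure H)) ∧
    (WayBelowI2 G H → upClosure H ⊆ upClosure G) ∧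
    (upClosure H ⊆ upClosure G → WayBelowI2 H K → upClosure M ⊆ upClosure K →
      WayBelowI2 G M) := by
  have upClosure_iff {A B : Set X} : WayBelowI2 A B ↔ WayBelowI2 (upClosure A) (upClosure B) := by
    rw [wayBelowI2_upClosure_left_iff, wayBelowI2_upClosure_right_iff]
  refine ⟨wayBelowI2_iff_forall_singleton, upClosure_iff, WayBelowI2.upClosure_subset, ?_⟩
  intro hHG hHK hMK
  exact upClosure_iff.mpr ((upClosure_iff.mp hHK).mono hHG hMK)

theorem stmt17 {X : Type} [TopologicalSpace X] [T0Space X] (G H K M : Set X) :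
    (WayBelowI2 G H ↔ ∀ h ∈ H, WayBelowI2 G {h}) ∧
    (WayBelowI2 G H ↔ WayBelowI2 (upClosure G) (upClosure H)) ∧
    (WayBelowI2 G H → upClosure H ⊆ upClosure G) ∧
    (upClosure H ⊆ upClosure G → WayBelowI2 H K → upClosure M ⊆ upClosure K →
      WayBelowI2 G M) :=
  stmt17_general G H K M
end
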